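/- arXiv:1710.07196 — 2 statements merged into one kernel-verified Lean document; each statement's English description precedes it below -/
import Mathlib

section
/- Let r, s be complex with Re(r) > 0, Re(s) > 0, Re(ρ ± λ + r) > −1/2, Re(ρ + s + λ) > −1/2, and z > 0 real. Then the double Mellin transform of the (p,q)-Whittaker function with respect to (p,q) satisfies ∫₀^∞ ∫₀^∞ p^{r−1} q^{s−1} M_{p,q;λ,ρ}(z) dp dq = [z^{ρ+1/2} e^{−z/2} Γ(r) Γ(s) B(ρ+r−λ+1/2, ρ+s+λ+1/2) / B(ρ−λ+1/2, ρ+λ+1/2)] · ₁F₁(ρ+r−λ+1/2; 2ρ+r+s+1; z). -/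
open MeasureTheory Set

/-- The Pochhammer symbol (x)_n. -/
noncomputable def poch (x : ℂ) (n : ℕ) : ℂ := (ascPochhammer ℂ n).eval x

/-- The confluent hypergeometric function ₁F₁. -/
noncomputable def oneF1 (a c z : ℂ) : ℂ := ∑' n : ℕ, poch a n / poch c n * z ^ n / n.factorial

/-- The (p,q)-Whittaker function, via its integral representation. -/
noncomputable def M (p q lam rho z : ℂ) : ℂ :=
  z ^ (rho + 1/2) * Complex.exp (-z / 2) /
      Complex.betaIntegral (rho - lam + 1/2) (rho + lam + 1/2) *
    ∫ t in (0:ℝ)..1, (t:ℂ) ^ (rho - lam - 1/2) * ((1:ℂ) - t) ^ (rho + lam - 1/2) *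
      Complex.exp (z * t - p / t - q / (1 - t))


lemma cpow_cont_aux (w : ℂ) {x : ℝ} (hx : 0 < x) :
    ContinuousAt (fun t : ℝ => (t : ℂ) ^ w) x :=
  (continuousAt_cpow_const (Complex.ofReal_mem_slitPlane.2 hx)).comp
    Complex.continuous_ofReal.continuousAt

lemma intGamma_aux {σ : ℂ} (hσ : 0 < σ.re) {c : ℝ} (hc : 0 < c) :
    IntegrableOn (fun q : ℝ => (q : ℂ) ^ (σ - 1) * Complex.exp (-((c : ℂ) * q))) (Set.Ioi 0) := by
  have h := Complex.GammaIntegral_convergent hσ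
  rw [← mul_zero c, ← integrableOn_Ioi_comp_mul_left_iff _ _ hc] at h
  refine IntegrableOn.congr_fun (h.const_mul ((1 : ℂ) / (c : ℂ) ^ (σ - 1))) (fun t ht => ?_) measurableSet_Ioi
  have ht' : (0 : ℝ) < t := ht
  have hcne : (c : ℂ) ^ (σ - 1) ≠ 0 := by
    simp [Complex.cpow_eq_zero_iff, Complex.ofReal_ne_zero, hc.ne']
  rw [Complex.ofReal_mul, Complex.mul_cpow_ofReal_nonneg hc.le ht'.le]
  rw [show ((Real.exp (-(c * t)) : ℝ) : ℂ) = Complex.exp (-((c:ℂ) * t)) by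
    push_cast [Complex.ofReal_exp]; ring_nf]
  field_simp

lemma swap_key {σ : ℂ} (hσ : 0 < σ.re) (g : ℝ → ℂ) (c : ℝ → ℝ)
    (hc : ∀ t ∈ Set.Ioo (0:ℝ) 1, 0 < c t)
    (hg : AEStronglyMeasurable g (volume.restrict (Set.Ioo 0 1)))
    (hcm : Measurable c)
    (hint : IntegrableOn (fun t => ‖g t‖ * c t ^ (-σ.re)) (Set.Ioo 0 1)) :
    ∫ q in Set.Ioi (0:ℝ), (q : ℂ) ^ (σ - 1) *
        ∫ t in Set.Ioo (0:ℝ) 1, g t * Complex.exp (-((c t : ℂ) * q)) =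
      Complex.Gamma σ * ∫ t in Set.Ioo (0:ℝ) 1, g t * ((c t : ℂ))⁻¹ ^ σ := by
  have hq : AEStronglyMeasurable (fun q : ℝ => (q : ℂ) ^ (σ - 1))
      (volume.restrict (Set.Ioi 0)) := by
    refine ContinuousOn.aestronglyMeasurable ?_ measurableSet_Ioi
    exact fun x hx => (cpow_cont_aux (σ - 1) hx).continuousWithinAt
  have hexp : AEStronglyMeasurable (fun x : ℝ × ℝ => Complex.exp (-((c x.1 : ℂ) * x.2)))
      ((volume.restrict (Set.Ioo 0 1)).prod (volume.restrict (Set.Ioi 0))) :=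
    (Complex.measurable_exp.comp (((Complex.measurable_ofReal.comp
      (hcm.comp measurable_fst)).mul
      (Complex.measurable_ofReal.comp measurable_snd)).neg)).aestronglyMeasurable
  have hm : AEStronglyMeasurable
      (fun x : ℝ × ℝ => g x.1 * ((x.2 : ℂ) ^ (σ - 1) * Complex.exp (-((c x.1 : ℂ) * x.2))))
      ((volume.restrict (Set.Ioo 0 1)).prod (volume.restrict (Set.Ioi 0))) :=
    hg.comp_fst.mul (hq.comp_snd.mul hexp)
  have hFi : Integrable
      (fun x : ℝ × ℝ =>
        g x.1 * ((x.2 : ℂ) ^ (σ - 1) * Complex.exp (-((c x.1 : ℂ) * x.2))))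
      ((volume.restrict (Set.Ioo 0 1)).prod (volume.restrict (Set.Ioi 0))) := by
    rw [integrable_prod_iff hm]
    constructor
    · filter_upwards [ae_restrict_mem measurableSet_Ioo] with t ht
      exact (intGamma_aux hσ (hc t ht)).const_mul _
    · refine Integrable.congr (hint.const_mul (Real.Gamma σ.re)) ?_
      filter_upwards [ae_restrict_mem measurableSet_Ioo] with t ht
      have hnorm : ∀ q ∈ Set.Ioi (0:ℝ),
          ‖g t * ((q : ℂ) ^ (σ - 1) * Complex.exp (-((c t : ℂ) * q)))‖ =
          ‖g t‖ * (q ^ (σ.re - 1) * Real.exp (-(c t * q))) := by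
        intro q hq'
        simp only [norm_mul, Complex.norm_exp,
          Complex.norm_cpow_eq_rpow_re_of_pos hq']
        simp [Complex.sub_re, Complex.mul_re]
      rw [setIntegral_congr_fun measurableSet_Ioi hnorm, integral_const_mul,
        Real.integral_rpow_mul_exp_neg_mul_Ioi hσ (hc t ht),
        one_div, Real.inv_rpow (hc t ht).le, ← Real.rpow_neg (hc t ht).le]
      ring
  have swap := integral_integral_swap (f := fun t q : ℝ => g t * ((q : ℂ) ^ (σ - 1) * Complex.exp (-((c t : ℂ) * q)))) hFi
  have e1 : ∀ q : ℝ, (q : ℂ) ^ (σ - 1) *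
      ∫ t in Set.Ioo (0:ℝ) 1, g t * Complex.exp (-((c t : ℂ) * q)) =
      ∫ t in Set.Ioo (0:ℝ) 1, g t * ((q : ℂ) ^ (σ - 1) * Complex.exp (-((c t : ℂ) * q))) := by
    intro q
    rw [← integral_const_mul]
    exact integral_congr_ae (Filter.Eventually.of_forall fun t => mul_left_comm _ _ _)
  simp_rw [e1]
  rw [← swap]
  have e2 : ∀ t ∈ Set.Ioo (0:ℝ) 1,
      (∫ q in Set.Ioi (0:ℝ), g t * ((q : ℂ) ^ (σ - 1) * Complex.exp (-((c t : ℂ) * q)))) =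
      Complex.Gamma σ * (g t * ((c t : ℂ))⁻¹ ^ σ) := by
    intro t ht
    rw [integral_const_mul, Complex.integral_cpow_mul_exp_neg_mul_Ioi hσ (hc t ht), one_div]
    ring
  rw [setIntegral_congr_fun measurableSet_Ioo e2, integral_const_mul]

lemma betaReal_integrable {a b : ℝ} (ha : 0 < a) (hb : 0 < b) :
    IntegrableOn (fun t : ℝ => t ^ (a - 1) * (1 - t) ^ (b - 1)) (Set.Ioo 0 1) := by
  have h := (Complex.betaIntegral_convergent (u := (a : ℂ)) (v := (b : ℂ))
    (by simpa using ha) (by simpa using hb)).norm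
  rw [intervalIntegrable_iff_integrableOn_Ioc_of_le zero_le_one] at h
  refine IntegrableOn.congr_fun (h.mono_set Set.Ioo_subset_Ioc_self)
    (fun t ht => ?_) measurableSet_Ioo
  obtain ⟨ht0, ht1⟩ := ht
  have h1t : (0:ℝ) < 1 - t := by linarith
  rw [norm_mul, Complex.norm_cpow_eq_rpow_re_of_pos ht0,
    show (1 : ℂ) - (t:ℝ) = ((1 - t : ℝ) : ℂ) by push_cast; ring,
    Complex.norm_cpow_eq_rpow_re_of_pos h1t]
  simp [Complex.sub_re]

lemma poch_succ (x : ℂ) (n : ℕ) : poch x (n + 1) = poch x n * (x + n) := by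
  simp [poch, ascPochhammer_succ_right]

lemma poch_ne_zero {x : ℂ} (hx : 0 < x.re) (n : ℕ) : poch x n ≠ 0 := by
  induction n with
  | zero => simp [poch]
  | succ n ih =>
    rw [poch_succ]
    refine mul_ne_zero ih ?_
    intro h
    have : (x + n).re = 0 := by rw [h]; simp
    simp only [Complex.add_re, Complex.natCast_re] at this
    have : (0:ℝ) ≤ (n:ℝ) := Nat.cast_nonneg n
    linarith [hx]

lemma Gamma_add_nat {x : ℂ} (hx : 0 < x.re) (n : ℕ) :
    Complex.Gamma (x + n) = poch x n * Complex.Gamma x := by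
  induction n with
  | zero => simp [poch]
  | succ n ih =>
    have hxn : (x + n) ≠ 0 := by
      intro h
      have : (x + n).re = 0 := by rw [h]; simp
      simp only [Complex.add_re, Complex.natCast_re] at this
      have : (0:ℝ) ≤ (n:ℝ) := Nat.cast_nonneg n
      linarith [hx]
    have : x + (n + 1 : ℕ) = (x + n) + 1 := by push_cast; ring
    rw [this, Complex.Gamma_add_one _ hxn, ih, poch_succ]
    ring

lemma beta_shift {a b : ℂ} (ha : 0 < a.re) (hb : 0 < b.re) (n : ℕ) :
    Complex.betaIntegral (a + n) b = poch a n / poch (a + b) n * Complex.betaIntegral a b := by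
  have hab : 0 < (a + b).re := by simp only [Complex.add_re]; linarith
  have han : 0 < (a + (n:ℂ)).re := by
    simp only [Complex.add_re, Complex.natCast_re]
    have : (0:ℝ) ≤ (n:ℝ) := Nat.cast_nonneg n
    linarith
  have h1 := Complex.Gamma_mul_Gamma_eq_betaIntegral han hb
  have h2 := Complex.Gamma_mul_Gamma_eq_betaIntegral ha hb
  have habn : 0 < (a + b + (n:ℂ)).re := by
    simp only [Complex.add_re, Complex.natCast_re]
    have : (0:ℝ) ≤ (n:ℝ) := Nat.cast_nonneg n
    linarith
  have e1 : a + (n:ℂ) + b = (a + b) + (n:ℂ) := by ring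
  rw [e1] at h1
  rw [Gamma_add_nat ha, Gamma_add_nat hab] at h1
  have hGab : Complex.Gamma (a + b) ≠ 0 := Complex.Gamma_ne_zero_of_re_pos hab
  have hGabn : Complex.Gamma (a + b + (n:ℂ)) ≠ 0 := Complex.Gamma_ne_zero_of_re_pos habn
  rw [Gamma_add_nat hab] at hGabn
  have hpn : poch (a + b) n ≠ 0 := poch_ne_zero hab n
  rw [div_mul_eq_mul_div, eq_div_iff hpn]
  refine mul_left_cancel₀ hGab ?_
  linear_combination poch a n * h2 - h1

lemma cpow_cont_aux2 (w : ℂ) {x : ℝ} (hx : x < 1) :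
    ContinuousAt (fun t : ℝ => ((1:ℂ) - t) ^ w) x := by
  have h1 : ((1:ℂ) - (x:ℝ)) ∈ Complex.slitPlane := by
    rw [Complex.mem_slitPlane_iff]
    left
    simp [Complex.sub_re]
    linarith
  have h2 : ContinuousAt (fun t : ℝ => (1:ℂ) - (t:ℂ)) x :=
    (continuous_const.sub Complex.continuous_ofReal).continuousAt
  exact ContinuousAt.comp (x := x) (g := fun u : ℂ => u ^ w)
    (f := fun t : ℝ => (1:ℂ) - (t:ℂ)) (continuousAt_cpow_const h1) h2

lemma beta_exp_integral {a b : ℂ} (ha : 0 < a.re) (hb : 0 < b.re) {z : ℝ} (hz : 0 < z) :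
    ∫ t in Set.Ioo (0:ℝ) 1, (t:ℂ) ^ (a - 1) * ((1:ℂ) - t) ^ (b - 1) * Complex.exp ((z:ℂ) * t)
      = Complex.betaIntegral a b * oneF1 a (a + b) (z:ℂ) := by
  set F : ℕ → ℝ → ℂ := fun n t =>
    (t:ℂ) ^ (a - 1) * ((1:ℂ) - t) ^ (b - 1) * (((z:ℂ) * t) ^ n / n.factorial) with hF
  have hmaster := betaReal_integrable ha hb
  set Breal : ℝ := ∫ t in Set.Ioo (0:ℝ) 1, t ^ (a.re - 1) * (1 - t) ^ (b.re - 1) with hBr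
  have hnormF : ∀ n : ℕ, ∀ t ∈ Set.Ioo (0:ℝ) 1,
      ‖F n t‖ = t ^ (a.re - 1) * (1 - t) ^ (b.re - 1) * ((z * t) ^ n / n.factorial) := by
    intro n t ht
    obtain ⟨ht0, ht1⟩ := ht
    have h1t : (0:ℝ) < 1 - t := by linarith
    have hzt : (0:ℝ) ≤ z * t := by positivity
    rw [hF]
    simp only [norm_mul, norm_div, Complex.norm_exp,
      Complex.norm_cpow_eq_rpow_re_of_pos ht0,
      show (1 : ℂ) - (t:ℝ) = ((1 - t : ℝ) : ℂ) by push_cast; ring,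
      Complex.norm_cpow_eq_rpow_re_of_pos h1t]
    rw [show ((z:ℂ) * (t:ℝ)) = ((z * t : ℝ) : ℂ) by push_cast; ring]
    rw [norm_pow, Complex.norm_real, Real.norm_of_nonneg hzt]
    simp [Complex.sub_re, Complex.norm_natCast]
  have hboundF : ∀ n : ℕ, ∀ t ∈ Set.Ioo (0:ℝ) 1,
      ‖F n t‖ ≤ z ^ n / n.factorial * (t ^ (a.re - 1) * (1 - t) ^ (b.re - 1)) := by
    intro n t ht
    rw [hnormF n t ht]
    obtain ⟨ht0, ht1⟩ := ht
    have h1t : (0:ℝ) < 1 - t := by linarith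
    have h1 : (z * t) ^ n ≤ z ^ n := by
      apply pow_le_pow_left₀ (by positivity)
      nlinarith
    have hpos1 : (0:ℝ) ≤ t ^ (a.re - 1) := (Real.rpow_pos_of_pos ht0 _).le
    have hpos2 : (0:ℝ) ≤ (1 - t) ^ (b.re - 1) := (Real.rpow_pos_of_pos h1t _).le
    have hfac : (0:ℝ) < n.factorial := by positivity
    rw [mul_comm (z ^ n / (n.factorial : ℝ))]
    refine mul_le_mul_of_nonneg_left ?_ (mul_nonneg hpos1 hpos2)
    exact (div_le_div_iff_of_pos_right hfac).mpr h1
  have hFmeas : ∀ n : ℕ, AEStronglyMeasurable (F n) (volume.restrict (Set.Ioo 0 1)) := by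
    intro n
    refine ContinuousOn.aestronglyMeasurable ?_ measurableSet_Ioo
    intro t ht
    exact (((cpow_cont_aux (a - 1) ht.1).mul (cpow_cont_aux2 (b - 1) ht.2)).mul
      (((continuous_const.mul Complex.continuous_ofReal).pow n).continuousAt.div_const
        _)).continuousWithinAt
  have hFint : ∀ n : ℕ, IntegrableOn (F n) (Set.Ioo 0 1) := by
    intro n
    refine Integrable.mono (hmaster.const_mul (z ^ n / n.factorial)) (hFmeas n) ?_
    filter_upwards [ae_restrict_mem measurableSet_Ioo] with t ht
    refine (hboundF n t ht).trans ?_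
    rw [Real.norm_eq_abs]
    exact le_abs_self _
  have hsum : Summable (fun n : ℕ => ∫ t in Set.Ioo (0:ℝ) 1, ‖F n t‖) := by
    refine Summable.of_nonneg_of_le
      (fun n => integral_nonneg (fun t => norm_nonneg _))
      (fun n => ?_)
      ((Real.summable_pow_div_factorial z).mul_right Breal)
    calc ∫ t in Set.Ioo (0:ℝ) 1, ‖F n t‖
        ≤ ∫ t in Set.Ioo (0:ℝ) 1, z ^ n / n.factorial * (t ^ (a.re - 1) * (1 - t) ^ (b.re - 1)) :=
          setIntegral_mono_on (hFint n).norm (hmaster.const_mul _) measurableSet_Ioo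
            (hboundF n)
      _ = z ^ n / n.factorial * Breal := by rw [integral_const_mul]
  have hBeta : ∀ n : ℕ, Complex.betaIntegral (a + n) b =
      ∫ t in Set.Ioo (0:ℝ) 1, (t:ℂ) ^ (a + n - 1) * ((1:ℂ) - t) ^ (b - 1) := by
    intro n
    rw [Complex.betaIntegral, intervalIntegral.integral_of_le zero_le_one,
      integral_Ioc_eq_integral_Ioo]
  calc ∫ t in Set.Ioo (0:ℝ) 1, (t:ℂ) ^ (a - 1) * ((1:ℂ) - t) ^ (b - 1) * Complex.exp ((z:ℂ) * t)
      = ∫ t in Set.Ioo (0:ℝ) 1, ∑' n : ℕ, F n t := by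
        refine integral_congr_ae (Filter.Eventually.of_forall fun t => ?_)
        rw [Complex.exp_eq_exp_ℂ, NormedSpace.exp_eq_tsum_div]
        exact tsum_mul_left.symm
    _ = ∑' n : ℕ, ∫ t in Set.Ioo (0:ℝ) 1, F n t :=
        (integral_tsum_of_summable_integral_norm hFint hsum).symm
    _ = ∑' n : ℕ, (z:ℂ) ^ n / n.factorial * Complex.betaIntegral (a + n) b := by
        refine tsum_congr fun n => ?_
        rw [hBeta n, ← integral_const_mul]
        refine setIntegral_congr_fun measurableSet_Ioo fun t ht => ?_
        obtain ⟨ht0, ht1⟩ := ht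
        have ht0' : (t:ℂ) ≠ 0 := by exact_mod_cast ht0.ne'
        rw [hF]
        simp only
        rw [mul_pow, show ((t:ℂ)) ^ n = (t:ℂ) ^ ((n:ℕ):ℂ) from (Complex.cpow_natCast _ _).symm,
          show a + (n:ℂ) - 1 = (a - 1) + ((n:ℕ):ℂ) by ring,
          Complex.cpow_add _ _ ht0']
        field_simp
    _ = ∑' n : ℕ, Complex.betaIntegral a b * (poch a n / poch (a + b) n * (z:ℂ) ^ n / n.factorial) := by
        refine tsum_congr fun n => ?_
        rw [beta_shift ha hb n]
        ring
    _ = Complex.betaIntegral a b * oneF1 a (a + b) (z:ℂ) := by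
        rw [tsum_mul_left, oneF1]

lemma exp_inv_cont (p : ℝ) {t : ℝ} (ht : t ≠ 0) :
    ContinuousAt (fun u : ℝ => Complex.exp (-(((u⁻¹ : ℝ) : ℂ) * p))) t := by
  have h1 : ContinuousAt (fun u : ℝ => ((u⁻¹ : ℝ) : ℂ)) t :=
    Complex.continuous_ofReal.continuousAt.comp (continuousAt_inv₀ ht)
  exact Complex.continuous_exp.continuousAt.comp ((h1.mul continuousAt_const).neg)

set_option maxHeartbeats 2000000 in
theorem M_mellin (lam rho r s : ℂ) (hr : 0 < r.re) (hs : 0 < s.re)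
    (h1 : -(1/2) < (rho + lam + r).re) (h2 : -(1/2) < (rho - lam + r).re)
    (h3 : -(1/2) < (rho + s + lam).re) (z : ℝ) (hz : 0 < z) :
    (∫ p in Set.Ioi (0:ℝ), ∫ q in Set.Ioi (0:ℝ),
        (p:ℂ) ^ (r - 1) * (q:ℂ) ^ (s - 1) * M p q lam rho z) =
      (z:ℂ) ^ (rho + 1/2) * Complex.exp (-z / 2) * Complex.Gamma r * Complex.Gamma s *
        Complex.betaIntegral (rho + r - lam + 1/2) (rho + s + lam + 1/2) /
        Complex.betaIntegral (rho - lam + 1/2) (rho + lam + 1/2) *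
        oneF1 (rho + r - lam + 1/2) (2 * rho + r + s + 1) z := by
  have h2' : -(1/2:ℝ) < rho.re - lam.re + r.re := by
    simpa [Complex.add_re, Complex.sub_re] using h2
  have h3' : -(1/2:ℝ) < rho.re + s.re + lam.re := by
    simpa [Complex.add_re] using h3
  set a : ℂ := rho + r - lam + 1/2 with ha_def
  set b : ℂ := rho + s + lam + 1/2 with hb_def
  have haRe : a.re = rho.re + r.re - lam.re + 1/2 := by
    simp [ha_def, Complex.add_re, Complex.sub_re]
  have hbRe : b.re = rho.re + s.re + lam.re + 1/2 := by
    simp [hb_def, Complex.add_re]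
  have ha : 0 < a.re := by rw [haRe]; linarith
  have hb : 0 < b.re := by rw [hbRe]; linarith
  set al : ℝ := rho.re - lam.re + 1/2 with hal
  set be : ℝ := rho.re + lam.re + 1/2 with hbe
  set g0 : ℝ → ℂ := fun t => (t:ℂ) ^ (rho - lam - 1/2) * ((1:ℂ) - t) ^ (rho + lam - 1/2) *
    Complex.exp ((z:ℂ) * t) with hg0
  set C : ℂ := (z:ℂ) ^ (rho + 1/2) * Complex.exp (-(z:ℂ) / 2) /
    Complex.betaIntegral (rho - lam + 1/2) (rho + lam + 1/2) with hC
  have hM : ∀ p q : ℝ, M p q lam rho z = C * ∫ t in Set.Ioo (0:ℝ) 1,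
      (g0 t * Complex.exp (-(((t⁻¹ : ℝ) : ℂ) * p))) *
        Complex.exp (-((((1 - t)⁻¹ : ℝ) : ℂ) * q)) := by
    intro p q
    rw [M, hC]
    congr 1
    rw [intervalIntegral.integral_of_le zero_le_one, integral_Ioc_eq_integral_Ioo]
    refine setIntegral_congr_fun measurableSet_Ioo fun t ht => ?_
    obtain ⟨ht0, ht1⟩ := ht
    have ht0' : (t:ℂ) ≠ 0 := by exact_mod_cast ht0.ne'
    have h1t : (0:ℝ) < 1 - t := by linarith
    have ht1' : (1:ℂ) - (t:ℂ) ≠ 0 := by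
      rw [show (1:ℂ) - (t:ℂ) = ((1 - t : ℝ) : ℂ) by push_cast; ring]
      exact_mod_cast h1t.ne'
    rw [show (z:ℂ) * t - p / t - q / (1 - t) =
        (z:ℂ) * t + (-(((t⁻¹ : ℝ) : ℂ) * p)) + (-((((1 - t)⁻¹ : ℝ) : ℂ) * q)) by
      push_cast
      field_simp
      ring, Complex.exp_add, Complex.exp_add, hg0]
    ring
  have hg0norm : ∀ t ∈ Set.Ioo (0:ℝ) 1,
      ‖g0 t‖ = t ^ (al - 1) * (1 - t) ^ (be - 1) * Real.exp (z * t) := by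
    intro t ht
    obtain ⟨ht0, ht1⟩ := ht
    have h1t : (0:ℝ) < 1 - t := by linarith
    rw [hg0]
    simp only [norm_mul, Complex.norm_exp,
      Complex.norm_cpow_eq_rpow_re_of_pos ht0,
      show (1:ℂ) - (t:ℝ) = ((1 - t : ℝ) : ℂ) by push_cast; ring,
      Complex.norm_cpow_eq_rpow_re_of_pos h1t]
    have e1 : (rho - lam - 1/2).re = al - 1 := by simp only [hal, Complex.sub_re]; simp; try ring
    have e2 : (rho + lam - 1/2).re = be - 1 := by simp only [hbe, Complex.sub_re, Complex.add_re]; simp; try ring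
    have e3 : ((z:ℂ) * (t:ℝ)).re = z * t := by simp
    rw [e1, e2, e3]
  have hg0m : AEStronglyMeasurable g0 (volume.restrict (Set.Ioo 0 1)) := by
    refine ContinuousOn.aestronglyMeasurable (fun t ht => ?_) measurableSet_Ioo
    exact (((cpow_cont_aux _ ht.1).mul (cpow_cont_aux2 _ ht.2)).mul
      ((Complex.continuous_exp.comp (continuous_const.mul
        Complex.continuous_ofReal)).continuousAt)).continuousWithinAt
  obtain ⟨N, hN⟩ := exists_nat_gt (-al)
  have halN : 0 < al + N := by linarith
  -- Step A: for fixed p > 0, compute the q-integral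
  have stepA : ∀ p ∈ Set.Ioi (0:ℝ),
      (∫ q in Set.Ioi (0:ℝ), (p:ℂ) ^ (r - 1) * (q:ℂ) ^ (s - 1) * M p q lam rho z) =
      (C * Complex.Gamma s) * ((p:ℂ) ^ (r - 1) *
        ∫ t in Set.Ioo (0:ℝ) 1,
          (g0 t * ((1:ℂ) - t) ^ s) * Complex.exp (-(((t⁻¹ : ℝ) : ℂ) * p))) := by
    intro p hp
    have hp' : (0:ℝ) < p := hp
    have e : ∀ q : ℝ, (p:ℂ) ^ (r - 1) * (q:ℂ) ^ (s - 1) * M p q lam rho z =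
        ((p:ℂ) ^ (r - 1) * C) * ((q:ℂ) ^ (s - 1) * ∫ t in Set.Ioo (0:ℝ) 1,
          (g0 t * Complex.exp (-(((t⁻¹ : ℝ) : ℂ) * p))) *
            Complex.exp (-((((1 - t)⁻¹ : ℝ) : ℂ) * q))) := by
      intro q
      rw [hM p q]
      ring
    rw [setIntegral_congr_fun measurableSet_Ioi (fun q _ => e q), integral_const_mul]
    have hgm : AEStronglyMeasurable (fun t => g0 t * Complex.exp (-(((t⁻¹ : ℝ) : ℂ) * p)))
        (volume.restrict (Set.Ioo 0 1)) := by
      refine ContinuousOn.aestronglyMeasurable (fun t ht => ?_) measurableSet_Ioo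
      exact ((((cpow_cont_aux _ ht.1).mul (cpow_cont_aux2 _ ht.2)).mul
        ((Complex.continuous_exp.comp (continuous_const.mul
          Complex.continuous_ofReal)).continuousAt)).mul
        (exp_inv_cont p ht.1.ne')).continuousWithinAt
    have hint1 : IntegrableOn
        (fun t => ‖g0 t * Complex.exp (-(((t⁻¹ : ℝ) : ℂ) * p))‖ *
          ((1 - t)⁻¹) ^ (-s.re)) (Set.Ioo (0:ℝ) 1) := by
      have hmaster := (betaReal_integrable (a := al + N) (b := be + s.re) halN
        (by rw [hbe]; linarith)).const_mul (Real.exp z * (N.factorial * p⁻¹ ^ N))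
      refine Integrable.mono hmaster ?_ ?_
      · refine ContinuousOn.aestronglyMeasurable (fun t ht => ?_) measurableSet_Ioo
        have h1t : (0:ℝ) < 1 - t := by linarith [ht.2]
        refine ContinuousWithinAt.mul ?_ ?_
        · exact (((((cpow_cont_aux _ ht.1).mul (cpow_cont_aux2 _ ht.2)).mul
            ((Complex.continuous_exp.comp (continuous_const.mul
              Complex.continuous_ofReal)).continuousAt)).mul
            (exp_inv_cont p ht.1.ne')).norm).continuousWithinAt
        · refine ContinuousAt.continuousWithinAt ?_
          have hcin : ContinuousAt (fun u : ℝ => (1 - u)⁻¹) t :=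
            (continuousAt_inv₀ h1t.ne').comp
              ((continuous_const.sub continuous_id).continuousAt)
          exact hcin.rpow_const (Or.inl (inv_ne_zero h1t.ne'))
      · filter_upwards [ae_restrict_mem measurableSet_Ioo] with t ht
        obtain ⟨ht0, ht1⟩ := ht
        have h1t : (0:ℝ) < 1 - t := by linarith
        have hnormexp : ‖Complex.exp (-(((t⁻¹ : ℝ) : ℂ) * p))‖ = Real.exp (-(t⁻¹ * p)) := by
          rw [Complex.norm_exp]
          norm_num
        have hrp : ((1 - t)⁻¹) ^ (-s.re) = (1 - t) ^ s.re := by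
          rw [Real.inv_rpow h1t.le, Real.rpow_neg h1t.le, inv_inv]
        rw [norm_mul, norm_norm, Real.norm_eq_abs ((1 - t)⁻¹ ^ (-s.re)),
          abs_of_nonneg (Real.rpow_nonneg (inv_nonneg.2 h1t.le) (-s.re)),
          norm_mul, hg0norm t ⟨ht0, ht1⟩, hnormexp, hrp, Real.norm_eq_abs]
        have hx : (0:ℝ) < t⁻¹ * p := mul_pos (inv_pos.2 ht0) hp'
        have key2 : Real.exp (-(t⁻¹ * p)) ≤ N.factorial * p⁻¹ ^ N * t ^ (N:ℝ) := by
          have hineq := Real.pow_div_factorial_le_exp (t⁻¹ * p) hx.le N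
          have hdpos : (0:ℝ) < (t⁻¹ * p) ^ N / N.factorial :=
            div_pos (pow_pos hx N) (by positivity)
          have h2i : (Real.exp (t⁻¹ * p))⁻¹ ≤ ((t⁻¹ * p) ^ N / N.factorial)⁻¹ :=
            inv_anti₀ hdpos hineq
          rw [Real.exp_neg]
          refine h2i.trans (le_of_eq ?_)
          rw [Real.rpow_natCast, mul_pow, inv_pow]
          have htN : (0:ℝ) < t ^ N := pow_pos ht0 N
          field_simp
          ring
          rw [← mul_pow, mul_inv_cancel₀ hp'.ne', one_pow]
        have key1 : Real.exp (z * t) ≤ Real.exp z := by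
          apply Real.exp_le_exp.2
          nlinarith
        have hnn1 : (0:ℝ) ≤ t ^ (al - 1) := Real.rpow_nonneg ht0.le _
        have hnn2 : (0:ℝ) ≤ (1 - t) ^ (be - 1) := Real.rpow_nonneg h1t.le _
        have hnn3 : (0:ℝ) ≤ (1 - t) ^ s.re := Real.rpow_nonneg h1t.le _
        have hnn4 : (0:ℝ) ≤ Real.exp (-(t⁻¹ * p)) := Real.exp_nonneg _
        have hnn5 : (0:ℝ) ≤ (N.factorial : ℝ) * p⁻¹ ^ N :=
          mul_nonneg (Nat.cast_nonneg _) (pow_nonneg (inv_nonneg.2 hp'.le) N)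
        have step : t ^ (al - 1) * (1 - t) ^ (be - 1) * Real.exp (z * t) *
            Real.exp (-(t⁻¹ * p)) * (1 - t) ^ s.re ≤
            t ^ (al - 1) * (1 - t) ^ (be - 1) * Real.exp z *
            (N.factorial * p⁻¹ ^ N * t ^ (N:ℝ)) * (1 - t) ^ s.re := by
          gcongr
          all_goals exact mul_nonneg hnn1 hnn2
        refine step.trans (le_of_eq ?_)
        have hc1 : t ^ (al - 1) * t ^ (N:ℝ) = t ^ (al + N - 1) := by
          rw [← Real.rpow_add ht0]
          ring_nf
        have hc2 : (1 - t) ^ (be - 1) * (1 - t) ^ s.re = (1 - t) ^ (be + s.re - 1) := by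
          rw [← Real.rpow_add h1t]
          ring_nf
        rw [abs_of_nonneg (mul_nonneg (mul_nonneg (Real.exp_nonneg _) hnn5)
          (mul_nonneg (Real.rpow_nonneg ht0.le _) (Real.rpow_nonneg h1t.le _)))]
        rw [← hc1, ← hc2]
        ring
    have sw := swap_key hs (fun t => g0 t * Complex.exp (-(((t⁻¹ : ℝ) : ℂ) * p)))
      (fun t : ℝ => (1 - t)⁻¹)
      (fun t ht => inv_pos.2 (by linarith [ht.2]))
      hgm ((measurable_const.sub measurable_id).inv) hint1
    rw [sw]
    have efix : ∀ t ∈ Set.Ioo (0:ℝ) 1,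
        (g0 t * Complex.exp (-(((t⁻¹ : ℝ) : ℂ) * p))) * ((((1 - t)⁻¹ : ℝ) : ℂ))⁻¹ ^ s =
        (g0 t * ((1:ℂ) - t) ^ s) * Complex.exp (-(((t⁻¹ : ℝ) : ℂ) * p)) := by
      intro t ht
      rw [show ((((1 - t)⁻¹ : ℝ) : ℂ))⁻¹ = (1:ℂ) - t by push_cast; rw [inv_inv]]
      ring
    rw [setIntegral_congr_fun measurableSet_Ioo efix]
    ring
  rw [setIntegral_congr_fun measurableSet_Ioi stepA, integral_const_mul]
  -- Step B: the p integral
  have hgm2 : AEStronglyMeasurable (fun t => g0 t * ((1:ℂ) - t) ^ s)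
      (volume.restrict (Set.Ioo 0 1)) := by
    refine ContinuousOn.aestronglyMeasurable (fun t ht => ?_) measurableSet_Ioo
    exact ((((cpow_cont_aux _ ht.1).mul (cpow_cont_aux2 _ ht.2)).mul
      ((Complex.continuous_exp.comp (continuous_const.mul
        Complex.continuous_ofReal)).continuousAt)).mul
      (cpow_cont_aux2 s ht.2)).continuousWithinAt
  have hint2 : IntegrableOn
      (fun t => ‖g0 t * ((1:ℂ) - t) ^ s‖ * (t⁻¹) ^ (-r.re)) (Set.Ioo (0:ℝ) 1) := by
    have hmaster := (betaReal_integrable (a := a.re) (b := b.re) ha hb).const_mul (Real.exp z)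
    refine Integrable.mono hmaster ?_ ?_
    · refine ContinuousOn.aestronglyMeasurable (fun t ht => ?_) measurableSet_Ioo
      refine ContinuousWithinAt.mul ?_ ?_
      · exact (((((cpow_cont_aux _ ht.1).mul (cpow_cont_aux2 _ ht.2)).mul
          ((Complex.continuous_exp.comp (continuous_const.mul
            Complex.continuous_ofReal)).continuousAt)).mul
          (cpow_cont_aux2 s ht.2)).norm).continuousWithinAt
      · exact ((continuousAt_inv₀ ht.1.ne').rpow_const
          (Or.inl (inv_ne_zero ht.1.ne'))).continuousWithinAt
    · filter_upwards [ae_restrict_mem measurableSet_Ioo] with t ht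
      obtain ⟨ht0, ht1⟩ := ht
      have h1t : (0:ℝ) < 1 - t := by linarith
      have hcp : ‖((1:ℂ) - t) ^ s‖ = (1 - t) ^ s.re := by
        rw [show (1:ℂ) - (t:ℝ) = ((1 - t : ℝ) : ℂ) by push_cast; ring,
          Complex.norm_cpow_eq_rpow_re_of_pos h1t]
      have hrp : (t⁻¹) ^ (-r.re) = t ^ r.re := by
        rw [Real.inv_rpow ht0.le, Real.rpow_neg ht0.le, inv_inv]
      rw [norm_mul, norm_norm, Real.norm_eq_abs (t⁻¹ ^ (-r.re)),
        abs_of_nonneg (Real.rpow_nonneg (inv_nonneg.2 ht0.le) (-r.re)),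
        norm_mul, hg0norm t ⟨ht0, ht1⟩, hcp, hrp, Real.norm_eq_abs]
      have key1 : Real.exp (z * t) ≤ Real.exp z := by
        apply Real.exp_le_exp.2
        nlinarith
      have hnn1 : (0:ℝ) ≤ t ^ (al - 1) := Real.rpow_nonneg ht0.le _
      have hnn2 : (0:ℝ) ≤ (1 - t) ^ (be - 1) := Real.rpow_nonneg h1t.le _
      have hnn3 : (0:ℝ) ≤ (1 - t) ^ s.re := Real.rpow_nonneg h1t.le _
      have hnn4 : (0:ℝ) ≤ t ^ r.re := Real.rpow_nonneg ht0.le _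
      have step : t ^ (al - 1) * (1 - t) ^ (be - 1) * Real.exp (z * t) *
          (1 - t) ^ s.re * t ^ r.re ≤
          t ^ (al - 1) * (1 - t) ^ (be - 1) * Real.exp z * (1 - t) ^ s.re * t ^ r.re := by
        gcongr
        all_goals exact mul_nonneg hnn1 hnn2
      refine step.trans (le_of_eq ?_)
      have hc1 : t ^ (al - 1) * t ^ r.re = t ^ (a.re - 1) := by
        rw [← Real.rpow_add ht0, haRe, hal]
        ring_nf
      have hc2 : (1 - t) ^ (be - 1) * (1 - t) ^ s.re = (1 - t) ^ (b.re - 1) := by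
        rw [← Real.rpow_add h1t, hbRe, hbe]
        ring_nf
      rw [abs_of_nonneg (mul_nonneg (Real.exp_nonneg _)
        (mul_nonneg (Real.rpow_nonneg ht0.le _) (Real.rpow_nonneg h1t.le _)))]
      rw [← hc1, ← hc2]
      ring
  have sw2 := swap_key hr (fun t => g0 t * ((1:ℂ) - t) ^ s) (fun t : ℝ => t⁻¹)
    (fun t ht => inv_pos.2 ht.1) hgm2 measurable_inv hint2
  rw [sw2]
  have e4 : ∀ t ∈ Set.Ioo (0:ℝ) 1,
      (g0 t * ((1:ℂ) - t) ^ s) * (((t⁻¹ : ℝ) : ℂ))⁻¹ ^ r =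
      (t:ℂ) ^ (a - 1) * ((1:ℂ) - t) ^ (b - 1) * Complex.exp ((z:ℂ) * t) := by
    intro t ht
    obtain ⟨ht0, ht1⟩ := ht
    have ht0' : (t:ℂ) ≠ 0 := by exact_mod_cast ht0.ne'
    have h1t : (0:ℝ) < 1 - t := by linarith
    have ht1' : (1:ℂ) - (t:ℂ) ≠ 0 := by
      rw [show (1:ℂ) - (t:ℂ) = ((1 - t : ℝ) : ℂ) by push_cast; ring]
      exact_mod_cast h1t.ne'
    rw [show (((t⁻¹ : ℝ) : ℂ))⁻¹ = (t:ℂ) by push_cast; rw [inv_inv], hg0]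
    simp only
    rw [show (a : ℂ) - 1 = (rho - lam - 1/2) + r by rw [ha_def]; ring,
      show (b : ℂ) - 1 = (rho + lam - 1/2) + s by rw [hb_def]; ring,
      Complex.cpow_add _ _ ht0', Complex.cpow_add _ _ ht1']
    ring
  rw [setIntegral_congr_fun measurableSet_Ioo e4, beta_exp_integral ha hb hz,
    show a + b = 2 * rho + r + s + 1 by rw [ha_def, hb_def]; ring, hC]
  ring
end

section
/- Let p, q ≥ 0, μ < 0, α + μ/2 > 0, 2α + μ > 2|μ|, Re(δ + ρ) > −1/2, Re(ρ ± λ) > −1/2. Then ∫₀^∞ z^{δ−1} e^{−αz} M_{p,q;λ,ρ}(μz) dz = [μ^{ρ+1/2} Γ(δ+ρ+1/2) / (α+μ/2)^{δ+ρ+1/2}] · F_{p,q}(δ+ρ+1/2, ρ−λ+1/2; 2ρ+1; 2μ/(2α+μ)). -/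
open MeasureTheory

/-- The (p,q)-extended beta function. -/
noncomputable def extBeta (p q x y : ℂ) : ℂ :=
  ∫ t in (0:ℝ)..1, (t:ℂ) ^ (x - 1) * ((1:ℂ) - t) ^ (y - 1) *
    Complex.exp (-p / t - q / (1 - t))

/-- The (p,q)-extended Gauss hypergeometric function, defined by its series. -/
noncomputable def Fpq (p q a b c x : ℂ) : ℂ :=
  ∑' n : ℕ, extBeta p q (b + n) (c - b) / Complex.betaIntegral b (c - b) *
    poch a n * x ^ n / n.factorial

open Complex Set MeasureTheory Filter

noncomputable def bF (p q : ℝ) (u v : ℂ) (t : ℝ) : ℂ :=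
  (t:ℂ) ^ (u - 1) * ((1:ℂ) - t) ^ (v - 1) * Complex.exp (-(p:ℂ) / t - (q:ℂ) / (1 - t))

lemma cpow_mul_ofReal_pos {x : ℂ} (hx : x ≠ 0) {r : ℝ} (hr : 0 < r) (w : ℂ) :
    (x * r) ^ w = x ^ w * (r:ℂ) ^ w := by
  have hr' : (r:ℂ) ≠ 0 := ofReal_ne_zero.mpr hr.ne'
  rw [cpow_def_of_ne_zero (mul_ne_zero hx hr'), cpow_def_of_ne_zero hx,
    cpow_def_of_ne_zero hr', Complex.log_mul_ofReal r hr x hx,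
    ← Complex.ofReal_log hr.le, ← Complex.exp_add]
  congr 1; ring

lemma bF_contOn (p q : ℝ) (u v : ℂ) : ContinuousOn (bF p q u v) (Ioo (0:ℝ) 1) := by
  intro t ht
  obtain ⟨h0, h1⟩ := ht
  have ht0 : (t:ℂ) ≠ 0 := ofReal_ne_zero.mpr h0.ne'
  have ht1 : (1:ℂ) - (t:ℂ) ≠ 0 := by
    rw [sub_ne_zero]
    exact_mod_cast (ne_of_lt h1).symm
  apply ContinuousAt.continuousWithinAt
  unfold bF
  apply ContinuousAt.mul
  apply ContinuousAt.mul
  · exact continuousAt_ofReal_cpow_const t (u-1) (Or.inr h0.ne')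
  · have hc : ContinuousAt (fun x : ℝ => (((1 - x : ℝ) : ℂ)) ^ (v-1)) t := by
      exact (continuousAt_ofReal_cpow_const (1-t) (v-1)
        (Or.inr (by linarith))).comp (by fun_prop)
    simpa [Complex.ofReal_sub, Complex.ofReal_one] using hc
  · apply Complex.continuous_exp.continuousAt.comp
    apply ContinuousAt.sub
    · exact ContinuousAt.div continuousAt_const Complex.continuous_ofReal.continuousAt ht0
    · exact ContinuousAt.div continuousAt_const
        (continuous_const.sub Complex.continuous_ofReal).continuousAt ht1
lemma bF_norm {p q : ℝ} (hp : 0 ≤ p) (hq : 0 ≤ q) (u v : ℂ) {t : ℝ} (ht : t ∈ Ioo (0:ℝ) 1) :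
    ‖bF p q u v t‖ ≤ t ^ (u.re - 1) * (1 - t) ^ (v.re - 1) := by
  obtain ⟨h0, h1⟩ := ht
  have h1' : (0:ℝ) < 1 - t := by linarith
  unfold bF
  have e1 : ‖(t:ℂ) ^ (u-1)‖ = t ^ (u.re - 1) := by
    rw [Complex.norm_cpow_eq_rpow_re_of_pos h0]
    simp
  have e2 : ‖((1:ℂ) - t) ^ (v-1)‖ = (1-t) ^ (v.re - 1) := by
    rw [show ((1:ℂ) - t) = (((1 - t : ℝ)):ℂ) by push_cast; ring,
      Complex.norm_cpow_eq_rpow_re_of_pos h1']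
    simp
  have e3 : ‖Complex.exp (-(p:ℂ) / t - (q:ℂ) / (1 - t))‖ ≤ 1 := by
    rw [show (-(p:ℂ) / t - (q:ℂ) / (1 - t)) = (((-p/t - q/(1-t) : ℝ)):ℂ) by push_cast; ring]
    rw [Complex.norm_exp]
    simp only [Complex.ofReal_re]
    rw [Real.exp_le_one_iff, neg_div]
    have : 0 ≤ p / t := by positivity
    have : 0 ≤ q / (1-t) := by positivity
    linarith
  calc ‖(t:ℂ) ^ (u - 1) * ((1:ℂ) - t) ^ (v - 1) * Complex.exp (-(p:ℂ) / t - (q:ℂ) / (1 - t))‖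
      = ‖(t:ℂ) ^ (u-1)‖ * ‖((1:ℂ) - t) ^ (v-1)‖ * ‖Complex.exp (-(p:ℂ) / t - (q:ℂ) / (1 - t))‖ := by
        rw [norm_mul, norm_mul]
    _ ≤ t ^ (u.re - 1) * (1 - t) ^ (v.re - 1) * 1 := by
        rw [e1, e2]
        gcongr
    _ = _ := by ring

lemma bF_pow_int {p q : ℝ} (hp : 0 ≤ p) (hq : 0 ≤ q) {u v : ℂ}
    (hu : 0 < u.re) (hv : 0 < v.re) (n : ℕ) :
    IntegrableOn (fun t : ℝ => (t:ℂ) ^ n * bF p q u v t) (Ioo 0 1) := by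
  have hbeta : IntegrableOn (fun t : ℝ =>
      (t:ℂ) ^ ((u.re : ℂ) - 1) * ((1:ℂ) - t) ^ ((v.re : ℂ) - 1)) (Ioo 0 1) := by
    have := Complex.betaIntegral_convergent (u := (u.re : ℂ)) (v := (v.re : ℂ))
      (by simpa using hu) (by simpa using hv)
    exact ((intervalIntegrable_iff_integrableOn_Ioc_of_le zero_le_one).mp this).mono_set
      Ioo_subset_Ioc_self
  refine Integrable.mono' hbeta.norm ?_ ?_
  · refine ContinuousOn.aestronglyMeasurable ?_ measurableSet_Ioo
    exact (Complex.continuous_ofReal.pow n).continuousOn.mul (bF_contOn p q u v)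
  · filter_upwards [ae_restrict_mem measurableSet_Ioo] with t ht
    obtain ⟨h0, h1⟩ := ht
    have hle : ‖(t:ℂ) ^ n * bF p q u v t‖ ≤ ‖bF p q u v t‖ := by
      rw [norm_mul]
      have : ‖(t:ℂ) ^ n‖ ≤ 1 := by
        rw [norm_pow, Complex.norm_real, Real.norm_eq_abs, abs_of_pos h0]
        exact pow_le_one₀ h0.le h1.le
      calc ‖(t:ℂ) ^ n‖ * ‖bF p q u v t‖ ≤ 1 * ‖bF p q u v t‖ := by gcongr
        _ = _ := one_mul _
    refine hle.trans ((bF_norm hp hq u v ⟨h0, h1⟩).trans (le_of_eq ?_))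
    rw [norm_mul]
    have e1 : ‖(t:ℂ) ^ ((u.re : ℂ) - 1)‖ = t ^ (u.re - 1) := by
      rw [Complex.norm_cpow_eq_rpow_re_of_pos h0]; simp
    have e2 : ‖((1:ℂ) - t) ^ ((v.re : ℂ) - 1)‖ = (1-t) ^ (v.re - 1) := by
      rw [show ((1:ℂ) - t) = (((1 - t : ℝ)):ℂ) by push_cast; ring,
        Complex.norm_cpow_eq_rpow_re_of_pos (by linarith)]
      simp
    rw [e1, e2]

lemma bF_int {p q : ℝ} (hp : 0 ≤ p) (hq : 0 ≤ q) {u v : ℂ}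
    (hu : 0 < u.re) (hv : 0 < v.re) :
    IntegrableOn (bF p q u v) (Ioo 0 1) := by
  have := bF_pow_int hp hq hu hv 0
  simpa using this

lemma bF_pow_norm_int_le {p q : ℝ} (hp : 0 ≤ p) (hq : 0 ≤ q) {u v : ℂ}
    (hu : 0 < u.re) (hv : 0 < v.re) (n : ℕ) :
    (∫ t in Ioo (0:ℝ) 1, ‖(t:ℂ) ^ n * bF p q u v t‖) ≤ ∫ t in Ioo (0:ℝ) 1, ‖bF p q u v t‖ := by
  refine setIntegral_mono_on (bF_pow_int hp hq hu hv n).norm (bF_int hp hq hu hv).norm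
    measurableSet_Ioo ?_
  intro t ht
  obtain ⟨h0, h1⟩ := ht
  rw [norm_mul]
  have : ‖(t:ℂ) ^ n‖ ≤ 1 := by
    rw [norm_pow, Complex.norm_real, Real.norm_eq_abs, abs_of_pos h0]
    exact pow_le_one₀ h0.le h1.le
  calc ‖(t:ℂ) ^ n‖ * ‖bF p q u v t‖ ≤ 1 * ‖bF p q u v t‖ := by gcongr
    _ = _ := one_mul _

lemma extBeta_eq (p q : ℝ) (u v : ℂ) (n : ℕ) :
    extBeta p q (u + n) v = ∫ t in Ioo (0:ℝ) 1, (t:ℂ) ^ n * bF p q u v t := by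
  unfold extBeta
  rw [intervalIntegral.integral_of_le zero_le_one, integral_Ioc_eq_integral_Ioo]
  refine setIntegral_congr_fun measurableSet_Ioo fun t ht => ?_
  obtain ⟨h0, h1⟩ := ht
  have ht0 : (t:ℂ) ≠ 0 := ofReal_ne_zero.mpr h0.ne'
  unfold bF
  rw [show u + n - 1 = (u - 1) + n by ring, cpow_add _ _ ht0, cpow_natCast]
  ring

lemma bF_exp_series {p q : ℝ} (hp : 0 ≤ p) (hq : 0 ≤ q) {u v : ℂ}
    (hu : 0 < u.re) (hv : 0 < v.re) (w : ℂ) :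
    (∫ t in Ioo (0:ℝ) 1, bF p q u v t * Complex.exp (w * t))
      = ∑' n : ℕ, w ^ n / (n.factorial : ℂ) * ∫ t in Ioo (0:ℝ) 1, (t:ℂ) ^ n * bF p q u v t := by
  have hint : ∀ n : ℕ, Integrable
      (fun t : ℝ => w ^ n / (n.factorial : ℂ) * ((t:ℂ) ^ n * bF p q u v t))
      (volume.restrict (Ioo (0:ℝ) 1)) := fun n =>
    (bF_pow_int hp hq hu hv n).const_mul _
  have hsum : Summable (fun n : ℕ =>
      ∫ t in Ioo (0:ℝ) 1, ‖w ^ n / (n.factorial : ℂ) * ((t:ℂ) ^ n * bF p q u v t)‖) := by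
    set Cf := ∫ t in Ioo (0:ℝ) 1, ‖bF p q u v t‖ with hCf
    refine Summable.of_nonneg_of_le (fun n => integral_nonneg fun t => norm_nonneg _)
      (fun n => ?_) (((Real.summable_pow_div_factorial ‖w‖).mul_right Cf))
    have heq : (∫ t in Ioo (0:ℝ) 1, ‖w ^ n / (n.factorial : ℂ) * ((t:ℂ) ^ n * bF p q u v t)‖)
        = ‖w ^ n / (n.factorial : ℂ)‖ * ∫ t in Ioo (0:ℝ) 1, ‖(t:ℂ) ^ n * bF p q u v t‖ := by
      rw [← integral_const_mul]
      refine setIntegral_congr_fun measurableSet_Ioo fun t _ => ?_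
      rw [norm_mul]
    rw [heq]
    have hn : ‖w ^ n / (n.factorial : ℂ)‖ = ‖w‖ ^ n / n.factorial := by
      rw [norm_div, norm_pow]
      norm_num
    rw [hn]
    have h2 := bF_pow_norm_int_le hp hq hu hv n
    calc ‖w‖ ^ n / n.factorial * ∫ t in Ioo (0:ℝ) 1, ‖(t:ℂ) ^ n * bF p q u v t‖
        ≤ ‖w‖ ^ n / n.factorial * Cf := by
          have h3 : (0:ℝ) ≤ ‖w‖ ^ n / n.factorial := by positivity
          gcongr
      _ = _ := rfl
  calc (∫ t in Ioo (0:ℝ) 1, bF p q u v t * Complex.exp (w * t))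
      = ∫ t in Ioo (0:ℝ) 1, ∑' n : ℕ, w ^ n / (n.factorial : ℂ) * ((t:ℂ) ^ n * bF p q u v t) := by
        refine setIntegral_congr_fun measurableSet_Ioo fun t _ => ?_
        have h1 : ∑' n : ℕ, w ^ n / (n.factorial : ℂ) * ((t:ℂ) ^ n * bF p q u v t)
            = ∑' n : ℕ, (w * t) ^ n / (n.factorial : ℂ) * bF p q u v t :=
          tsum_congr fun n => by rw [mul_pow]; ring
        have h2 : Complex.exp (w * t) = ∑' n : ℕ, (w * t) ^ n / (n.factorial : ℂ) := by
          rw [Complex.exp_eq_exp_ℂ, NormedSpace.exp_eq_tsum_div]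
        rw [h1, tsum_mul_right, ← h2]
        ring
    _ = ∑' n : ℕ, ∫ t in Ioo (0:ℝ) 1,
          w ^ n / (n.factorial : ℂ) * ((t:ℂ) ^ n * bF p q u v t) :=
        (MeasureTheory.integral_tsum_of_summable_integral_norm hint hsum).symm
    _ = _ := tsum_congr fun n => integral_const_mul _ _

lemma zint_contOn (a : ℂ) (A : ℝ) :
    ContinuousOn (fun z : ℝ => (z:ℂ) ^ (a - 1) * Complex.exp (-((A:ℂ) * z))) (Ioi 0) := by
  intro z hz
  apply ContinuousAt.continuousWithinAt
  apply ContinuousAt.mul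
  · exact continuousAt_ofReal_cpow_const z (a-1) (Or.inr (ne_of_gt hz))
  · exact Complex.continuous_exp.continuousAt.comp (by fun_prop)

lemma zint_norm {a : ℂ} {A z : ℝ} (hz : 0 < z) :
    ‖(z:ℂ) ^ (a - 1) * Complex.exp (-((A:ℂ) * z))‖ = z ^ (a.re - 1) * Real.exp (-(A * z)) := by
  rw [norm_mul, Complex.norm_cpow_eq_rpow_re_of_pos hz,
    show -((A:ℂ) * z) = (((-(A*z) : ℝ)):ℂ) by push_cast; ring,
    Complex.norm_exp]
  simp

lemma rexp_int {σ : ℝ} (hσ : 0 < σ) {A : ℝ} (hA : 0 < A) :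
    IntegrableOn (fun z : ℝ => z ^ (σ - 1) * Real.exp (-(A * z))) (Ioi 0) := by
  have := integrableOn_rpow_mul_exp_neg_mul_rpow (s := σ - 1) (p := 1) (b := A)
    (by linarith) zero_lt_one hA
  simpa [Real.rpow_one, neg_mul] using this

lemma zint_int {a : ℂ} (ha : 0 < a.re) {A : ℝ} (hA : 0 < A) :
    IntegrableOn (fun z : ℝ => (z:ℂ) ^ (a - 1) * Complex.exp (-((A:ℂ) * z))) (Ioi 0) := by
  refine Integrable.mono' (rexp_int (σ := a.re) (by linarith) hA) ?_ ?_
  · exact (zint_contOn a A).aestronglyMeasurable measurableSet_Ioi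
  · filter_upwards [ae_restrict_mem measurableSet_Ioi] with z hz
    rw [zint_norm hz]

lemma zint_norm_integral {a : ℂ} (ha : 0 < a.re) {A : ℝ} (hA : 0 < A) :
    (∫ z in Ioi (0:ℝ), ‖(z:ℂ) ^ (a - 1) * Complex.exp (-((A:ℂ) * z))‖)
      = (1 / A) ^ a.re * Real.Gamma a.re := by
  rw [← Real.integral_rpow_mul_exp_neg_mul_Ioi ha hA]
  exact setIntegral_congr_fun measurableSet_Ioi fun z hz => zint_norm hz

lemma Gamma_poch {s : ℂ} (hs : 0 < s.re) (n : ℕ) :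
    Complex.Gamma (s + n) = Complex.Gamma s * (ascPochhammer ℂ n).eval s := by
  induction n with
  | zero => simp
  | succ n ih =>
      have hne : s + (n:ℂ) ≠ 0 := by
        intro h
        have := congrArg Complex.re h
        simp only [Complex.add_re, Complex.natCast_re, Complex.zero_re] at this
        have : (0:ℝ) ≤ (n:ℝ) := Nat.cast_nonneg n
        linarith
      have : s + ((n+1 : ℕ):ℂ) = (s + n) + 1 := by push_cast; ring
      rw [this, Complex.Gamma_add_one _ hne, ih, ascPochhammer_succ_right]
      simp [Polynomial.eval_mul]
      ring

lemma ratio_summable {σ : ℝ} (hσ : 0 < σ) {r : ℝ} (hr0 : 0 < r) (hr : r < 1) :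
    Summable (fun n : ℕ => Real.Gamma (σ + n) * r ^ n / n.factorial) := by
  have hpos : ∀ n : ℕ, 0 < Real.Gamma (σ + n) * r ^ n / n.factorial := fun n => by
    have h1 : 0 < Real.Gamma (σ + n) := Real.Gamma_pos_of_pos (by positivity)
    positivity
  refine summable_of_ratio_test_tendsto_lt_one hr (Filter.Eventually.of_forall
    fun n => (hpos n).ne') ?_
  have key : ∀ n : ℕ, ‖Real.Gamma (σ + (n+1)) * r ^ (n+1) / (n+1).factorial‖ /
      ‖Real.Gamma (σ + n) * r ^ n / n.factorial‖ = r * ((σ + n) / (n + 1)) := by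
    intro n
    rw [Real.norm_of_nonneg (hpos n).le, Real.norm_of_nonneg (by
      have := hpos (n+1); push_cast at this ⊢; linarith)]
    have h1 : 0 < Real.Gamma (σ + n) := Real.Gamma_pos_of_pos (by positivity)
    have h2 : σ + ((n:ℝ)+1) = (σ + n) + 1 := by ring
    have h3 : Real.Gamma (σ + ((n:ℝ)+1)) = (σ + n) * Real.Gamma (σ + n) := by
      rw [h2, Real.Gamma_add_one (by positivity)]
    have h4 : ((n+1).factorial : ℝ) = (n+1) * n.factorial := by
      rw [Nat.factorial_succ]; push_cast; ring
    push_cast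
    rw [h3, h4]
    have hf : (0:ℝ) < n.factorial := by positivity
    field_simp
    ring
  have h5 : Filter.Tendsto (fun n : ℕ => (σ + n) / (n + 1)) Filter.atTop (nhds 1) := by
    have h6 : ∀ n : ℕ, (σ + (n:ℝ)) / ((n:ℝ) + 1) = (σ - 1) / ((n:ℝ) + 1) + 1 := by
      intro n
      have : ((n:ℝ) + 1) ≠ 0 := by positivity
      field_simp
      ring
    simp only [h6]
    have h7 : Filter.Tendsto (fun n : ℕ => (σ - 1) / ((n:ℝ) + 1)) Filter.atTop (nhds 0) := by
      apply Filter.Tendsto.div_atTop tendsto_const_nhds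
      exact Filter.tendsto_atTop_add_const_right _ 1 tendsto_natCast_atTop_atTop
    simpa using h7.add tendsto_const_nhds
  have h8 := h5.const_mul r
  simpa using h8.congr fun n => (key n).symm

theorem M_laplace_type (p q : ℝ) (hp : 0 ≤ p) (hq : 0 ≤ q) (lam rho δ : ℂ)
    (μ α : ℝ) (hμ : μ < 0) (hαμ : 0 < α + μ / 2) (hb : 2 * |μ| < 2 * α + μ)
    (hδρ : -(1/2) < (δ + rho).re)
    (h1 : -(1/2) < (rho + lam).re) (h2 : -(1/2) < (rho - lam).re) :
    (∫ z in Set.Ioi (0:ℝ), (z:ℂ) ^ (δ - 1) * Complex.exp (-α * z) * M p q lam rho (μ * z)) =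
      (μ:ℂ) ^ (rho + 1/2) * Complex.Gamma (δ + rho + 1/2) /
        ((α:ℂ) + μ / 2) ^ (δ + rho + 1/2) *
        Fpq p q (δ + rho + 1/2) (rho - lam + 1/2) (2 * rho + 1) (2 * μ / (2 * α + μ)) := by
  have half : ((1:ℂ)/2).re = 1/2 := by norm_num [Complex.div_re]
  simp only [Complex.add_re, Complex.sub_re] at hδρ h1 h2
  set u : ℂ := rho - lam + 1/2 with hu_def
  set v : ℂ := rho + lam + 1/2 with hv_def
  set s : ℂ := δ + rho + 1/2 with hs_def
  have hu : 0 < u.re := by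
    rw [hu_def]; simp only [Complex.add_re, Complex.sub_re]; rw [half]; linarith
  have hv : 0 < v.re := by
    rw [hv_def]; simp only [Complex.add_re, Complex.sub_re]; rw [half]; linarith
  have hs : 0 < s.re := by
    rw [hs_def]; simp only [Complex.add_re, Complex.sub_re]; rw [half]; linarith
  set A : ℝ := α + μ / 2 with hA_def
  have hA : 0 < A := hαμ
  have hAc : (A:ℂ) = (α:ℂ) + (μ:ℂ)/2 := by rw [hA_def]; push_cast; ring
  have hμ0 : ((μ:ℝ):ℂ) ≠ 0 := ofReal_ne_zero.mpr hμ.ne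
  have hA0 : ((A:ℝ):ℂ) ≠ 0 := ofReal_ne_zero.mpr hA.ne'
  have hAμ : |μ| < A := by rw [abs_of_neg hμ]; rw [hA_def]; linarith [abs_of_neg hμ ▸ hb]
  set B0 : ℂ := Complex.betaIntegral u v with hB0_def
  set E : ℕ → ℂ := fun n => extBeta p q (u + n) v with hE_def
  set C : ℕ → ℂ := fun n =>
    (μ:ℂ) ^ (rho + 1/2) / B0 * E n * (μ:ℂ) ^ n / (n.factorial : ℂ) with hC_def
  set F : ℕ → ℝ → ℂ := fun n z =>
    C n * ((z:ℂ) ^ (s + n - 1) * Complex.exp (-((A:ℂ) * z))) with hF_def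
  have hres : ∀ n : ℕ, 0 < (s + (n:ℂ)).re := fun n => by
    simp only [Complex.add_re, Complex.natCast_re]
    have : (0:ℝ) ≤ (n:ℝ) := Nat.cast_nonneg n
    linarith
  -- Step 1: pointwise expansion of the integrand into a series
  have key : ∀ z ∈ Ioi (0:ℝ),
      (z:ℂ) ^ (δ - 1) * Complex.exp (-(α:ℂ) * z) * M p q lam rho ((μ:ℂ) * z)
        = ∑' n : ℕ, F n z := by
    intro z hz
    have hz0 : (0:ℝ) < z := hz
    have hzc : (z:ℂ) ≠ 0 := ofReal_ne_zero.mpr hz0.ne'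
    have hInner : (∫ t in (0:ℝ)..1, (t:ℂ) ^ (rho - lam - 1/2) * ((1:ℂ) - t) ^ (rho + lam - 1/2) *
        Complex.exp (((μ:ℂ) * z) * t - p / t - q / (1 - t)))
        = ∑' n : ℕ, ((μ:ℂ) * z) ^ n / (n.factorial : ℂ) *
            ∫ t in Ioo (0:ℝ) 1, (t:ℂ) ^ n * bF p q u v t := by
      rw [intervalIntegral.integral_of_le zero_le_one, integral_Ioc_eq_integral_Ioo,
        ← bF_exp_series hp hq hu hv ((μ:ℂ) * z)]
      refine setIntegral_congr_fun measurableSet_Ioo fun t ht => ?_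
      unfold bF
      rw [show rho - lam - 1/2 = u - 1 by rw [hu_def]; ring,
        show rho + lam - 1/2 = v - 1 by rw [hv_def]; ring,
        mul_assoc ((t:ℂ) ^ (u-1) * ((1:ℂ) - t) ^ (v-1)), ← Complex.exp_add]
      congr 1
      ring
    unfold M
    rw [hInner]
    have hEint : ∀ n : ℕ, (∫ t in Ioo (0:ℝ) 1, (t:ℂ) ^ n * bF p q u v t) = E n := fun n =>
      (extBeta_eq p q u v n).symm
    have hzpow : ∀ n : ℕ, (z:ℂ) ^ (s + (n:ℂ) - 1)
        = (z:ℂ) ^ (δ - 1) * (z:ℂ) ^ (rho + 1/2) * (z:ℂ) ^ n := fun n => by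
      rw [← cpow_natCast, ← cpow_add _ _ hzc, ← cpow_add _ _ hzc]
      congr 1
      rw [hs_def]; ring
    have hexp : ∀ n : ℕ, Complex.exp (-((A:ℂ) * z))
        = Complex.exp (-(α:ℂ) * z) * Complex.exp (-((μ:ℂ) * z) / 2) := fun n => by
      rw [← Complex.exp_add]
      congr 1
      rw [hAc]; ring
    symm
    calc ∑' n : ℕ, F n z
        = ∑' n : ℕ, (z:ℂ) ^ (δ - 1) * Complex.exp (-(α:ℂ) * z) *
            (((μ:ℂ) * z) ^ (rho + 1/2) * Complex.exp (-((μ:ℂ) * z) / 2) / B0 *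
              (((μ:ℂ) * z) ^ n / (n.factorial : ℂ) *
                ∫ t in Ioo (0:ℝ) 1, (t:ℂ) ^ n * bF p q u v t)) := by
          refine tsum_congr fun n => ?_
          rw [hF_def, hC_def]
          simp only
          rw [hEint n, hzpow n, hexp n, cpow_mul_ofReal_pos hμ0 hz0 (rho + 1/2), mul_pow]
          ring
      _ = _ := by
          rw [tsum_mul_left]
          congr 1
          rw [tsum_mul_left]
  -- Step 2: integrability and summability in z
  set Cf : ℝ := ∫ t in Ioo (0:ℝ) 1, ‖bF p q u v t‖ with hCf_def
  have hE_bound : ∀ n : ℕ, ‖E n‖ ≤ Cf := fun n => by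
    rw [hE_def]
    simp only
    rw [extBeta_eq p q u v n]
    exact (norm_integral_le_integral_norm _).trans (bF_pow_norm_int_le hp hq hu hv n)
  have hFint : ∀ n : ℕ, Integrable (F n) (volume.restrict (Ioi (0:ℝ))) := fun n => by
    rw [hF_def]
    exact (zint_int (hres n) hA).const_mul _
  set σ : ℝ := s.re with hσ_def
  set r : ℝ := |μ| / A with hr_def
  have hr0 : 0 < r := div_pos (abs_pos.mpr hμ.ne) hA
  have hr1 : r < 1 := (div_lt_one hA).mpr hAμ
  have hnorm_int : ∀ n : ℕ, (∫ z in Ioi (0:ℝ), ‖F n z‖)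
      = ‖C n‖ * ((1/A) ^ (σ + n) * Real.Gamma (σ + n)) := fun n => by
    have hre : (s + (n:ℂ)).re = σ + n := by
      simp [Complex.add_re, Complex.natCast_re, hσ_def]
    have h1 : (∫ z in Ioi (0:ℝ), ‖F n z‖)
        = ‖C n‖ * ∫ z in Ioi (0:ℝ), ‖(z:ℂ) ^ (s + (n:ℂ) - 1) * Complex.exp (-((A:ℂ) * z))‖ := by
      rw [← integral_const_mul]
      refine setIntegral_congr_fun measurableSet_Ioi fun z hz => ?_
      rw [hF_def]
      simp only
      rw [norm_mul]
    rw [h1, zint_norm_integral (hres n) hA, hre]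
  have hFsum : Summable fun n : ℕ => ∫ z in Ioi (0:ℝ), ‖F n z‖ := by
    have hcomp : Summable (fun n : ℕ =>
        (‖(μ:ℂ) ^ (rho + 1/2) / B0‖ * Cf * (1/A) ^ σ)
          * (Real.Gamma (σ + n) * r ^ n / n.factorial)) :=
      (ratio_summable hs hr0 hr1).mul_left _
    refine Summable.of_nonneg_of_le (fun n => integral_nonneg fun z => norm_nonneg _)
      (fun n => ?_) hcomp
    rw [hnorm_int n]
    have hCn : ‖C n‖ = ‖(μ:ℂ) ^ (rho + 1/2) / B0‖ * ‖E n‖ * |μ| ^ n / n.factorial := by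
      rw [hC_def]
      simp only
      rw [norm_div, norm_mul, norm_mul, norm_pow, Complex.norm_real, Real.norm_eq_abs,
        Complex.norm_natCast]
    have hA1 : (0:ℝ) < 1/A := by positivity
    have hsplit : (1/A) ^ (σ + (n:ℝ)) = (1/A) ^ σ * (1/A) ^ n := by
      rw [Real.rpow_add hA1, Real.rpow_natCast]
    rw [hCn, hsplit]
    have h9 : 0 < Real.Gamma (σ + n) := Real.Gamma_pos_of_pos (by positivity)
    have hf0 : (0:ℝ) < n.factorial := by positivity
    calc ‖(μ:ℂ) ^ (rho + 1/2) / B0‖ * ‖E n‖ * |μ| ^ n / n.factorial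
          * ((1/A) ^ σ * (1/A) ^ n * Real.Gamma (σ + n))
        = (‖(μ:ℂ) ^ (rho + 1/2) / B0‖ * (1/A) ^ σ * Real.Gamma (σ + n) / n.factorial
            * (|μ| ^ n * (1/A) ^ n)) * ‖E n‖ := by ring
      _ ≤ (‖(μ:ℂ) ^ (rho + 1/2) / B0‖ * (1/A) ^ σ * Real.Gamma (σ + n) / n.factorial
            * (|μ| ^ n * (1/A) ^ n)) * Cf := by
          have hnn : 0 ≤ ‖(μ:ℂ) ^ (rho + 1/2) / B0‖ * (1/A) ^ σ * Real.Gamma (σ + n)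
              / n.factorial * (|μ| ^ n * (1/A) ^ n) := by positivity
          exact mul_le_mul_of_nonneg_left (hE_bound n) hnn
      _ = _ := by rw [hr_def]; ring
  -- Step 3: assemble
  have hx : (2*(μ:ℂ))/(2*(α:ℂ)+(μ:ℂ)) = (μ:ℂ) * (1/((A:ℝ):ℂ)) := by
    have h2A : (2*(α:ℂ)+(μ:ℂ)) = 2*((A:ℝ):ℂ) := by rw [hAc]; ring
    rw [h2A]
    field_simp
  have h1A0 : (1/((A:ℝ):ℂ)) ≠ 0 := one_div_ne_zero hA0
  have hargA : (((A:ℝ):ℂ)).arg ≠ Real.pi := by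
    rw [Complex.arg_ofReal_of_nonneg hA.le]
    exact Real.pi_ne_zero.symm
  have hcb' : 2*rho+1 - u = v := by rw [hu_def, hv_def]; ring
  rw [show ((α:ℂ) + (μ:ℂ)/2) = ((A:ℝ):ℂ) from hAc.symm, hx]
  calc (∫ z in Ioi (0:ℝ), (z:ℂ) ^ (δ - 1) * Complex.exp (-(α:ℂ) * z) * M p q lam rho ((μ:ℂ) * z))
      = ∫ z in Ioi (0:ℝ), ∑' n : ℕ, F n z :=
        setIntegral_congr_fun measurableSet_Ioi fun z hz => key z hz
    _ = ∑' n : ℕ, ∫ z in Ioi (0:ℝ), F n z :=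
        (MeasureTheory.integral_tsum_of_summable_integral_norm hFint hFsum).symm
    _ = ∑' n : ℕ, C n * ((1/((A:ℝ):ℂ)) ^ (s + (n:ℂ)) * Complex.Gamma (s + (n:ℂ))) := by
        refine tsum_congr fun n => ?_
        rw [hF_def]
        simp only
        rw [integral_const_mul, Complex.integral_cpow_mul_exp_neg_mul_Ioi (hres n) hA]
    _ = (μ:ℂ) ^ (rho + 1/2) * Complex.Gamma s / ((A:ℝ):ℂ) ^ s *
          Fpq p q s u (2*rho+1) ((μ:ℂ) * (1/((A:ℝ):ℂ))) := by
        simp only [Fpq]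
        rw [hcb', ← tsum_mul_left]
        refine tsum_congr fun n => ?_
        rw [Gamma_poch hs n, cpow_add _ _ h1A0, cpow_natCast]
        simp only [one_div]
        rw [Complex.inv_cpow _ _ hargA]
        simp only [hC_def, hE_def, poch, hB0_def]
        ring
end
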